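/- arXiv:cs/0006012 — 2 statements merged into one kernel-verified Lean document; each statement's English description precedes it below -/
import Mathlib

section
/- If each of k parsers outputs a set of constituents (intervals with labels) such that no two constituents within one parser's output cross (i.e., their spans are either nested or disjoint), then the set of constituents receiving strictly more than k/2 votes (i.e., appearing in strictly more than k/2 of the parsers' outputs) contains no two crossing constituents. -/
/-- Two spans cross: they overlap but neither is nested in the other. -/
def Crosses (c d : ℕ × ℕ) : Prop :=
  (c.1 < d.1 ∧ d.1 < c.2 ∧ c.2 < d.2) ∨ (d.1 < c.1 ∧ c.1 < d.2 ∧ d.2 < c.2)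

theorem exists_and_of_two_mul_card_gt {ι : Type*} [Finite ι] {P Q : ι → Prop}
    (hP : Nat.card ι < 2 * Nat.card {i // P i}) (hQ : Nat.card ι < 2 * Nat.card {i // Q i}) :
    ∃ i, P i ∧ Q i := by
  by_contra! h
  have hdisj : Disjoint {i | P i} {i | Q i} := Set.disjoint_left.2 h
  have hsum : Nat.card {i // P i} + Nat.card {i // Q i} ≤ Nat.card ι :=
    (Set.ncard_union_eq hdisj).symm.trans_le (Set.ncard_le_card _)
  omega

theorem majority_vote_crossing_free {L : Type} (k : ℕ)
    (S : Fin k → Set (ℕ × ℕ × L))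
    (hfree : ∀ p, ∀ c ∈ S p, ∀ d ∈ S p, ¬ Crosses (c.1, c.2.1) (d.1, d.2.1))
    (c d : ℕ × ℕ × L)
    (hc : 2 * Nat.card {p : Fin k // c ∈ S p} > k)
    (hd : 2 * Nat.card {p : Fin k // d ∈ S p} > k) :
    ¬ Crosses (c.1, c.2.1) (d.1, d.2.1) := by
  obtain ⟨p, hpc, hpd⟩ := exists_and_of_two_mul_card_gt (P := (c ∈ S ·)) (Q := (d ∈ S ·))
    (by rwa [Nat.card_fin]) (by rwa [Nat.card_fin])
  exact hfree p c hpc d hpd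
end

section
/- Let d be a metric (symmetric, satisfying the triangle inequality, with d(x,x)=0) on a space of parses, and let π₁,…,πₙ (n ≥ 1) be observed parses. Let g be a minimizer over {π₁,…,πₙ} of the sum Σᵢ d(πᵢ, ·), and let c be any point in the whole space. Then Σᵢ d(πᵢ, g) ≤ (2(n−1)/n) · Σᵢ d(πᵢ, c). -/
/-!
Every sample πⱼ is itself a candidate, so the total distance from the samples to the best
candidate is at most the average over j of Σᵢ d(πᵢ, πⱼ). By the triangle inequality through c,
each off-diagonal term d(πᵢ, πⱼ) is at most d(πᵢ, c) + d(πⱼ, c); the diagonal terms vanish, and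
each d(πᵢ, c) is counted 2(n − 1) times in the double sum over i ≠ j.
-/

open Finset

section

variable {X ι : Type*} [Fintype ι] {d : X → X → ℝ}

theorem sum_d_to_sample_le (hsymm : ∀ x y, d x y = d y x)
    (htri : ∀ x y z, d x z ≤ d x y + d y z) (hrefl : ∀ x, d x x = 0)
    (f : ι → X) (c : X) (j : ι) :
    ∑ i, d (f i) (f j) ≤ ∑ i, d (f i) c + ((Fintype.card ι : ℝ) - 2) * d (f j) c := by
  classical
  have hcard : ((univ.erase j).card : ℝ) = Fintype.card ι - 1 := by
    rw [card_erase_of_mem (mem_univ j), card_univ,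
      Nat.cast_sub (Fintype.card_pos_iff.mpr ⟨j⟩), Nat.cast_one]
  have hsplit := sum_erase_add univ (fun i => d (f i) c) (mem_univ j)
  calc ∑ i, d (f i) (f j) = ∑ i ∈ univ.erase j, d (f i) (f j) := by
        rw [← sum_erase_add _ _ (mem_univ j), hrefl, add_zero]
    _ ≤ ∑ i ∈ univ.erase j, (d (f i) c + d (f j) c) :=
        sum_le_sum fun i _ => (htri _ c _).trans_eq (by rw [hsymm c])
    _ = ∑ i, d (f i) c + ((Fintype.card ι : ℝ) - 2) * d (f j) c := by
        rw [sum_add_distrib, sum_const, nsmul_eq_mul, hcard, ← hsplit]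
        ring

theorem card_mul_sum_d_le_of_forall_le (hsymm : ∀ x y, d x y = d y x)
    (htri : ∀ x y z, d x z ≤ d x y + d y z) (hrefl : ∀ x, d x x = 0)
    (f : ι → X) (g c : X) (hmin : ∀ j, ∑ i, d (f i) g ≤ ∑ i, d (f i) (f j)) :
    (Fintype.card ι : ℝ) * ∑ i, d (f i) g ≤ 2 * ((Fintype.card ι : ℝ) - 1) * ∑ i, d (f i) c := by
  calc (Fintype.card ι : ℝ) * ∑ i, d (f i) g = ∑ _j : ι, ∑ i, d (f i) g := by
        rw [sum_const, card_univ, nsmul_eq_mul]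
    _ ≤ ∑ j, (∑ i, d (f i) c + ((Fintype.card ι : ℝ) - 2) * d (f j) c) :=
        sum_le_sum fun j _ => (hmin j).trans (sum_d_to_sample_le hsymm htri hrefl f c j)
    _ = 2 * ((Fintype.card ι : ℝ) - 1) * ∑ i, d (f i) c := by
        rw [sum_add_distrib, sum_const, card_univ, nsmul_eq_mul, ← mul_sum]
        ring

end

theorem centroid_approximation_bound_general {X : Type} (d : X → X → ℝ)
    (hsymm : ∀ x y, d x y = d y x)
    (htri : ∀ x y z, d x z ≤ d x y + d y z)
    (hrefl : ∀ x, d x x = 0)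
    (n : ℕ) (π : Fin n → X)
    (g : X)
    (hmin : ∀ j : Fin n, ∑ i, d (π i) g ≤ ∑ i, d (π i) (π j))
    (c : X) :
    ∑ i, d (π i) g ≤ (2 * ((n : ℝ) - 1) / n) * ∑ i, d (π i) c := by
  obtain rfl | hn := n.eq_zero_or_pos
  · simp
  have key := card_mul_sum_d_le_of_forall_le hsymm htri hrefl π g c hmin
  rw [Fintype.card_fin] at key
  rw [div_mul_eq_mul_div, le_div_iff₀ (by exact_mod_cast hn), mul_comm]
  exact key

theorem centroid_approximation_bound {X : Type} (d : X → X → ℝ)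
    (hsymm : ∀ x y, d x y = d y x)
    (htri : ∀ x y z, d x z ≤ d x y + d y z)
    (hrefl : ∀ x, d x x = 0)
    (n : ℕ) (hn : 1 ≤ n) (π : Fin n → X)
    (g : X) (i₀ : Fin n) (hg : g = π i₀)
    (hmin : ∀ j : Fin n, ∑ i, d (π i) g ≤ ∑ i, d (π i) (π j))
    (c : X) :
    ∑ i, d (π i) g ≤ (2 * ((n : ℝ) - 1) / n) * ∑ i, d (π i) c :=
  centroid_approximation_bound_general d hsymm htri hrefl n π g hmin c
end
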